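/- Let Q be a supported quantale with support ς and unit e, and let a be a partial unit of Q. Then: (i) ς a = a a*; (ii) a = a a* a; (iii) a a = a if and only if a ≤ e; (iv) for every b ∈ Q, b ≤ a if and only if b = (ς b) a. -/

import Mathlib

/-!
Since `a a* ≤ e`, the inequality `a ≤ (ς a) a` gives `a a* ≤ (ς a) a a* ≤ ς a`, which together
with `ς a ≤ a a*` is (i); likewise `a ≤ (ς a) a ≤ a a* a ≤ e a` is (ii). Everything else is
monotonicity of the operations (they preserve joins) combined with `a a* ≤ e` and `a* a ≤ e`:
an idempotent partial unit satisfies `a = (a a*)(a* a) ≤ e`, a partial unit below `e` has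
`a* ≤ e* = e` and hence `a = a a* a ≤ a a`, and `b ≤ a` gives `(ς b) a ≤ b b* a ≤ b a* a ≤ b`.
-/

/-- A partial unit in a unital involutive quantale. -/
def IsPartialUnit {Q : Type*} [CompleteLattice Q]
    (m : Q → Q → Q) (e : Q) (st : Q → Q) (a : Q) : Prop :=
  m a (st a) ≤ e ∧ m (st a) a ≤ e

theorem monotone_of_map_sSup {α β : Type*} [CompleteLattice α] [CompleteLattice β] {f : α → β}
    (hf : ∀ T : Set α, f (sSup T) = sSup (f '' T)) : Monotone f :=
  OrderHomClass.mono (sSupHom.mk f hf)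

theorem star_unit_eq {Q : Type*} {m : Q → Q → Q} {e : Q} {st : Q → Q}
    (her : ∀ a : Q, m a e = a) (hstst : ∀ a : Q, st (st a) = a)
    (hstm : ∀ a b : Q, st (m a b) = m (st b) (st a)) : st e = e := by
  have h := hstm (st e) e
  rwa [her, hstst, her, eq_comm] at h

section PartialUnit

variable {Q : Type*} [CompleteLattice Q] {m : Q → Q → Q} {e : Q} {st sp : Q → Q}

theorem support_eq_mul_star_of_isPartialUnit (hassoc : ∀ a b c : Q, m (m a b) c = m a (m b c))
    (hmonol : ∀ c : Q, Monotone (m · c)) (hmonor : ∀ c : Q, Monotone (m c))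
    (her : ∀ a : Q, m a e = a) (hsp2 : ∀ a : Q, sp a ≤ m a (st a))
    (hsp3 : ∀ a : Q, a ≤ m (sp a) a) {a : Q} (ha : IsPartialUnit m e st a) :
    sp a = m a (st a) := by
  refine le_antisymm (hsp2 a) ?_
  calc m a (st a) ≤ m (m (sp a) a) (st a) := hmonol _ (hsp3 a)
    _ = m (sp a) (m a (st a)) := hassoc _ _ _
    _ ≤ m (sp a) e := hmonor _ ha.1
    _ = sp a := her _

theorem mul_star_mul_eq_self_of_isPartialUnit (hmonol : ∀ c : Q, Monotone (m · c))
    (hel : ∀ a : Q, m e a = a) (hsp2 : ∀ a : Q, sp a ≤ m a (st a))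
    (hsp3 : ∀ a : Q, a ≤ m (sp a) a) {a : Q} (ha : IsPartialUnit m e st a) :
    a = m (m a (st a)) a := by
  refine le_antisymm ((hsp3 a).trans (hmonol _ (hsp2 a))) ?_
  calc m (m a (st a)) a ≤ m e a := hmonol _ ha.1
    _ = a := hel _

theorem le_unit_of_mul_self_eq (hassoc : ∀ a b c : Q, m (m a b) c = m a (m b c))
    (hmonol : ∀ c : Q, Monotone (m · c)) (hel : ∀ a : Q, m e a = a)
    (hstm : ∀ a b : Q, st (m a b) = m (st b) (st a)) {a : Q} (ha : IsPartialUnit m e st a)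
    (hreg : a = m (m a (st a)) a) (hidem : m a a = a) : a ≤ e := by
  have hst : m (st a) (st a) = st a := by rw [← hstm, hidem]
  calc a = m (m a (m (st a) (st a))) a := by rw [hst, ← hreg]
    _ = m (m a (st a)) (m (st a) a) := by rw [← hassoc, hassoc]
    _ ≤ m e (m (st a) a) := hmonol _ ha.1
    _ = m (st a) a := hel _
    _ ≤ e := ha.2

theorem mul_self_eq_of_le_unit (hmonol : ∀ c : Q, Monotone (m · c))
    (hmonor : ∀ c : Q, Monotone (m c)) (her : ∀ a : Q, m a e = a) (hstmono : Monotone st)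
    (hste : st e = e) {a : Q} (hreg : a = m (m a (st a)) a) (hle : a ≤ e) : m a a = a := by
  refine le_antisymm ((hmonor a hle).trans (her a).le) ?_
  calc a = m (m a (st a)) a := hreg
    _ ≤ m (m a e) a := hmonol _ (hmonor _ (hste ▸ hstmono hle))
    _ = m a a := by rw [her]

theorem le_iff_eq_support_mul (hassoc : ∀ a b c : Q, m (m a b) c = m a (m b c))
    (hmonol : ∀ c : Q, Monotone (m · c)) (hmonor : ∀ c : Q, Monotone (m c))
    (hel : ∀ a : Q, m e a = a) (her : ∀ a : Q, m a e = a) (hstmono : Monotone st)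
    (hsp1 : ∀ a : Q, sp a ≤ e) (hsp2 : ∀ a : Q, sp a ≤ m a (st a))
    (hsp3 : ∀ a : Q, a ≤ m (sp a) a) {a : Q} (ha : m (st a) a ≤ e) (b : Q) :
    b ≤ a ↔ b = m (sp b) a := by
  constructor
  · intro hb
    refine le_antisymm ((hsp3 b).trans (hmonor _ hb)) ?_
    calc m (sp b) a ≤ m (m b (st b)) a := hmonol _ (hsp2 b)
      _ = m b (m (st b) a) := hassoc _ _ _
      _ ≤ m b (m (st a) a) := hmonor _ (hmonol _ (hstmono hb))
      _ ≤ m b e := hmonor _ ha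
      _ = b := her _
  · intro hb
    calc b = m (sp b) a := hb
      _ ≤ m e a := hmonol _ (hsp1 b)
      _ = a := hel _

end PartialUnit

theorem stmt_7_general {Q : Type*} [CompleteLattice Q]
    (m : Q → Q → Q) (e : Q) (st : Q → Q) (sp : Q → Q)
    (hassoc : ∀ a b c : Q, m (m a b) c = m a (m b c))
    (hdistl : ∀ (a : Q) (T : Set Q), m a (sSup T) = sSup ((fun b => m a b) '' T))
    (hdistr : ∀ (b : Q) (T : Set Q), m (sSup T) b = sSup ((fun a => m a b) '' T))
    (hel : ∀ a : Q, m e a = a) (her : ∀ a : Q, m a e = a)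
    (hstsup : ∀ T : Set Q, st (sSup T) = sSup (st '' T))
    (hstst : ∀ a : Q, st (st a) = a)
    (hstm : ∀ a b : Q, st (m a b) = m (st b) (st a))
    (hsp1 : ∀ a : Q, sp a ≤ e)
    (hsp2 : ∀ a : Q, sp a ≤ m a (st a))
    (hsp3 : ∀ a : Q, a ≤ m (sp a) a)
    (a : Q) (ha : IsPartialUnit m e st a) :
    sp a = m a (st a) ∧
    a = m (m a (st a)) a ∧
    (m a a = a ↔ a ≤ e) ∧
    (∀ b : Q, b ≤ a ↔ b = m (sp b) a) := by
  have hmonol : ∀ c, Monotone (m · c) := fun c => monotone_of_map_sSup (hdistr c)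
  have hmonor : ∀ c, Monotone (m c) := fun c => monotone_of_map_sSup (hdistl c)
  have hstmono : Monotone st := monotone_of_map_sSup hstsup
  have hreg := mul_star_mul_eq_self_of_isPartialUnit hmonol hel hsp2 hsp3 ha
  refine ⟨support_eq_mul_star_of_isPartialUnit hassoc hmonol hmonor her hsp2 hsp3 ha, hreg,
    ⟨le_unit_of_mul_self_eq hassoc hmonol hel hstm ha hreg,
      mul_self_eq_of_le_unit hmonol hmonor her hstmono (star_unit_eq her hstst hstm) hreg⟩,
    le_iff_eq_support_mul hassoc hmonol hmonor hel her hstmono hsp1 hsp2 hsp3 ha.2⟩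

/-- Properties of partial units in a supported quantale (Lemma `prop:ipi`). -/
theorem stmt_7 {Q : Type*} [CompleteLattice Q]
    (m : Q → Q → Q) (e : Q) (st : Q → Q) (sp : Q → Q)
    (hassoc : ∀ a b c : Q, m (m a b) c = m a (m b c))
    (hdistl : ∀ (a : Q) (T : Set Q), m a (sSup T) = sSup ((fun b => m a b) '' T))
    (hdistr : ∀ (b : Q) (T : Set Q), m (sSup T) b = sSup ((fun a => m a b) '' T))
    (hel : ∀ a : Q, m e a = a) (her : ∀ a : Q, m a e = a)
    (hstsup : ∀ T : Set Q, st (sSup T) = sSup (st '' T))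
    (hstst : ∀ a : Q, st (st a) = a)
    (hstm : ∀ a b : Q, st (m a b) = m (st b) (st a))
    (hspsup : ∀ T : Set Q, sp (sSup T) = sSup (sp '' T))
    (hsp1 : ∀ a : Q, sp a ≤ e)
    (hsp2 : ∀ a : Q, sp a ≤ m a (st a))
    (hsp3 : ∀ a : Q, a ≤ m (sp a) a)
    (a : Q) (ha : IsPartialUnit m e st a) :
    sp a = m a (st a) ∧
    a = m (m a (st a)) a ∧
    (m a a = a ↔ a ≤ e) ∧
    (∀ b : Q, b ≤ a ↔ b = m (sp b) a) :=
  stmt_7_general m e st sp hassoc hdistl hdistr hel her hstsup hstst hstm hsp1 hsp2 hsp3 a ha
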